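/- arXiv:1209.3209 — 8 statements merged into one kernel-verified Lean document; each statement's English description precedes it below -/
import Mathlib

section
/- Let Σ be a semigroup of self-maps and define for f, g : V^n → V the function f ∘_Σ g : V^n → V by (f ∘_Σ g)(X) = f(g(A_{σ₁}X),…,g(A_{σₙ}X)). Then γ_f ∘ γ_g = γ_{f ∘_Σ g}, where γ_f : V^N → V^N is the network map (γ_f)_i(x) = f(x_{σ₁(i)},…,x_{σₙ(i)}). -/
/-- The map A_{σⱼ} : V^n → V^n, A_{σⱼ}(X)ₖ = X_{σ̃ₖ(j)}. -/
def AM {n : ℕ} {V : Type*} (σt : Fin n → Fin n → Fin n) (j : Fin n)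
    (X : Fin n → V) : Fin n → V := fun k => X (σt k j)

/-- The network map γ_f : V^N → V^N, (γ_f)_i(x) = f(x_{σ₁(i)},…,x_{σₙ(i)}). -/
def net {N n : ℕ} {V : Type*} (σ : Fin n → Fin N → Fin N)
    (f : (Fin n → V) → V) (x : Fin N → V) : Fin N → V :=
  fun i => f (fun j => x (σ j i))

/-- The symbolic composition (f ∘_Σ g)(X) = f(g(A_{σ₁}X),…,g(A_{σₙ}X)). -/
def scomp {n : ℕ} {V : Type*} (σt : Fin n → Fin n → Fin n)
    (f g : (Fin n → V) → V) (X : Fin n → V) : V :=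
  f (fun j => g (AM σt j X))

theorem AM_proj {N n : ℕ} {V : Type*} {σ : Fin n → Fin N → Fin N} {σt : Fin n → Fin n → Fin n}
    (hσt : ∀ j k : Fin n, σ (σt j k) = σ j ∘ σ k) (j : Fin n) (x : Fin N → V) (i : Fin N) :
    AM σt j (fun k => x (σ k i)) = fun k => x (σ k (σ j i)) := by
  funext k
  simp only [AM, hσt, Function.comp_apply]

theorem stmt4_general {N n : ℕ} {V : Type*} (σ : Fin n → Fin N → Fin N)
    (σt : Fin n → Fin n → Fin n)
    (hσt : ∀ j k : Fin n, σ (σt j k) = σ j ∘ σ k)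
    (f g : (Fin n → V) → V) :
    (net σ f) ∘ (net σ g) = net σ (scomp σt f g) := by
  funext x i
  simp only [Function.comp_apply, net, scomp, AM_proj hσt]

/-- γ_f ∘ γ_g = γ_{f ∘_Σ g}. -/
theorem stmt4 {N n : ℕ} {V : Type*} (σ : Fin n → Fin N → Fin N)
    (hinj : Function.Injective σ)
    (σt : Fin n → Fin n → Fin n)
    (hσt : ∀ j k : Fin n, σ (σt j k) = σ j ∘ σ k)
    (f g : (Fin n → V) → V) :
    (net σ f) ∘ (net σ g) = net σ (scomp σt f g) :=
  stmt4_general σ σt hσt f g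
end

section
/- The symbolic composition ∘_Σ is associative: (f ∘_Σ g) ∘_Σ h = f ∘_Σ (g ∘_Σ h) for all functions f, g, h : V^n → V. -/
/-! Injectivity of `σ` transports associativity of composition to the index operation `σt`,
and then `A_j ∘ A_k = A_{σt j k}`: both sides of the theorem evaluate at `X` to
`f (fun k => g (fun l => h (A_{σt l k} X)))`. -/

theorem assoc_of_injective_of_comp {ι α : Type*} {σ : ι → α → α} (hinj : Function.Injective σ)
    {σt : ι → ι → ι} (hσt : ∀ j k, σ (σt j k) = σ j ∘ σ k) (a b c : ι) :
    σt (σt a b) c = σt a (σt b c) :=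
  hinj <| by simp only [hσt, Function.comp_assoc]

section

variable {n : ℕ} {V : Type*} {σt : Fin n → Fin n → Fin n}

theorem AM_AM (hassoc : ∀ a b c, σt (σt a b) c = σt a (σt b c)) (j k : Fin n)
    (X : Fin n → V) : AM σt j (AM σt k X) = AM σt (σt j k) X := by
  funext m
  simp only [AM, hassoc]

theorem scomp_assoc (hassoc : ∀ a b c, σt (σt a b) c = σt a (σt b c))
    (f g h : (Fin n → V) → V) :
    scomp σt (scomp σt f g) h = scomp σt f (scomp σt g h) := by
  funext X
  simp only [scomp, AM_AM hassoc]
  rfl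

end

/-- the symbolic composition ∘_Σ is associative. -/
theorem stmt5 {N n : ℕ} {V : Type*} (σ : Fin n → Fin N → Fin N)
    (hinj : Function.Injective σ)
    (σt : Fin n → Fin n → Fin n)
    (hσt : ∀ j k : Fin n, σ (σt j k) = σ j ∘ σ k)
    (f g h : (Fin n → V) → V) :
    scomp σt (scomp σt f g) h = scomp σt f (scomp σt g h) :=
  scomp_assoc (assoc_of_injective_of_comp hinj hσt) f g h
end

section
/- Let Σ be a semigroup of self-maps and for smooth f, g : V^n → V define [f,g]_Σ := Σⱼ Dⱼf · (g ∘ A_{σⱼ}) − Dⱼg · (f ∘ A_{σⱼ}). Then the Lie bracket of the network vector fields satisfies [γ_f, γ_g] = γ_{[f,g]_Σ}, where [γ_f, γ_g](x) = Dγ_f(x)·γ_g(x) − Dγ_g(x)·γ_f(x). -/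
/-- The symbolic bracket [f,g]_Σ = Σⱼ Dⱼf·(g ∘ A_{σⱼ}) − Dⱼg·(f ∘ A_{σⱼ}),
where the partial derivative Dⱼf·v is the derivative of f in the direction
of v placed in the j-th slot. -/
noncomputable def bracketS {n : ℕ} {V : Type*} [NormedAddCommGroup V]
    [NormedSpace ℝ V] (σt : Fin n → Fin n → Fin n)
    (f g : (Fin n → V) → V) (X : Fin n → V) : V :=
  ∑ j : Fin n,
    (fderiv ℝ f X (Pi.single j (g (AM σt j X))) -
      fderiv ℝ g X (Pi.single j (f (AM σt j X))))

section aux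

variable {N n : ℕ} {V : Type*} [NormedAddCommGroup V] [NormedSpace ℝ V]

/-- The continuous linear map x ↦ (j ↦ x (σ j i)). -/
noncomputable def Lm (σ : Fin n → Fin N → Fin N) (i : Fin N) :
    (Fin N → V) →L[ℝ] (Fin n → V) :=
  ContinuousLinearMap.pi (fun j => ContinuousLinearMap.proj (σ j i))

lemma Lm_apply (σ : Fin n → Fin N → Fin N) (i : Fin N) (x : Fin N → V) :
    (Lm σ i x : Fin n → V) = fun j => x (σ j i) := rfl

lemma net_eq (σ : Fin n → Fin N → Fin N) (h : (Fin n → V) → V) :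
    net σ h = fun x i => h (Lm σ i x) := rfl

lemma fderiv_net (σ : Fin n → Fin N → Fin N) (h : (Fin n → V) → V)
    (hh : ContDiff ℝ (⊤ : ℕ∞) h) (x : Fin N → V) (v : Fin N → V) (i : Fin N) :
    fderiv ℝ (net σ h) x v i = fderiv ℝ h (Lm σ i x) (Lm σ i v) := by
  have hd : ∀ i : Fin N, DifferentiableAt ℝ (fun y : Fin N → V => h (Lm σ i y)) x := by
    intro i
    exact (hh.differentiable (by simp) (Lm σ i x)).comp x (ContinuousLinearMap.differentiableAt (Lm σ i) (x := x))
  have h1 : fderiv ℝ (net σ h) x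
      = ContinuousLinearMap.pi (fun i => fderiv ℝ (fun y => h (Lm σ i y)) x) := by
    rw [net_eq]; exact fderiv_pi hd
  have h2 : fderiv ℝ (fun y => h (Lm σ i y)) x
      = (fderiv ℝ h (Lm σ i x)).comp (Lm σ i) := by
    have := fderiv_comp x (hh.differentiable (by simp) (Lm σ i x)) (ContinuousLinearMap.differentiableAt (Lm σ i) (x := x))
    rw [ContinuousLinearMap.fderiv (𝕜 := ℝ) (E := Fin N → V) (F := Fin n → V) (f := Lm σ i) (x := x)] at this
    exact this
  rw [h1]
  simp [h2]

end aux

/-- [γ_f, γ_g] = γ_{[f,g]_Σ}, where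
[γ_f, γ_g](x) = Dγ_f(x)·γ_g(x) − Dγ_g(x)·γ_f(x). -/
theorem stmt6 {N n : ℕ} {V : Type*} [NormedAddCommGroup V] [NormedSpace ℝ V]
    [FiniteDimensional ℝ V]
    (σ : Fin n → Fin N → Fin N)
    (hinj : Function.Injective σ)
    (σt : Fin n → Fin n → Fin n)
    (hσt : ∀ j k : Fin n, σ (σt j k) = σ j ∘ σ k)
    (f g : (Fin n → V) → V)
    (hf : ContDiff ℝ (⊤ : ℕ∞) f) (hg : ContDiff ℝ (⊤ : ℕ∞) g) :
    ∀ x : Fin N → V,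
      fderiv ℝ (net σ f) x (net σ g x) - fderiv ℝ (net σ g) x (net σ f x)
        = net σ (bracketS σt f g) x := by
  intro x
  funext i
  have key : ∀ h : (Fin n → V) → V,
      (Lm σ i (net σ h x) : Fin n → V) = fun j => h (AM σt j (Lm σ i x)) := by
    intro h
    funext j
    show (net σ h x) (σ j i) = h (AM σt j (Lm σ i x))
    unfold net AM
    congr 1
    funext k
    show x (σ k (σ j i)) = x (σ (σt k j) i)
    rw [hσt k j]; rfl
  have expand : ∀ (h : (Fin n → V) → V) (w : Fin n → V),
      fderiv ℝ h (Lm σ i x) w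
        = ∑ j : Fin n, fderiv ℝ h (Lm σ i x) (Pi.single j (w j)) := by
    intro h w
    rw [← map_sum]
    congr 1
    exact (Finset.univ_sum_single w).symm
  have lhsf := fderiv_net σ f hf x (net σ g x) i
  have lhsg := fderiv_net σ g hg x (net σ f x) i
  show fderiv ℝ (net σ f) x (net σ g x) i - fderiv ℝ (net σ g) x (net σ f x) i
      = bracketS σt f g (fun j => x (σ j i))
  rw [lhsf, lhsg, key g, key f, expand f, expand g, bracketS, ← Lm_apply σ i x,
    Finset.sum_sub_distrib]
end

section
/- The symbolic bracket [f,g]_Σ := Σⱼ Dⱼf · (g ∘ A_{σⱼ}) − Dⱼg · (f ∘ A_{σⱼ}) on smooth functions V^n → V is antisymmetric and satisfies the Jacobi identity [f,[g,h]_Σ]_Σ + [g,[h,f]_Σ]_Σ + [h,[f,g]_Σ]_Σ = 0, making C^∞(V^n, V) a Lie algebra. -/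
section Helpers

variable {n : ℕ} {V : Type*} [NormedAddCommGroup V] [NormedSpace ℝ V]

/-- `AM σt j` as a continuous linear map. -/
def ALM (σt : Fin n → Fin n → Fin n) (j : Fin n) : (Fin n → V) →L[ℝ] (Fin n → V) :=
  ContinuousLinearMap.pi fun k => ContinuousLinearMap.proj (σt k j)

lemma ALM_apply (σt : Fin n → Fin n → Fin n) (j : Fin n) (X : Fin n → V) :
    ALM σt j X = AM σt j X := rfl

/-- `Pi.single j` as a continuous linear map. -/
def SL (j : Fin n) : V →L[ℝ] (Fin n → V) :=
  ContinuousLinearMap.pi fun i => if i = j then ContinuousLinearMap.id ℝ V else 0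

lemma SL_apply (j : Fin n) (v : V) : SL j v = Pi.single j v := by
  funext i
  by_cases h : i = j <;>
    simp [SL, ContinuousLinearMap.pi_apply, Pi.single_apply, h]

lemma contDiff_P (σt : Fin n → Fin n → Fin n) {g h : (Fin n → V) → V}
    (hg : ContDiff ℝ (⊤ : ℕ∞) g) (hh : ContDiff ℝ (⊤ : ℕ∞) h) (k : Fin n) :
    ContDiff ℝ (⊤ : ℕ∞) (fun X : Fin n → V => fderiv ℝ g X (Pi.single k (h (AM σt k X)))) := by
  have h1 : ContDiff ℝ (⊤ : ℕ∞) (fderiv ℝ g) := hg.fderiv_right (by simp)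
  have h2 : ContDiff ℝ (⊤ : ℕ∞) (fun X : Fin n → V => (Pi.single k (h (AM σt k X)) : Fin n → V)) := by
    have : (fun X : Fin n → V => (Pi.single k (h (AM σt k X)) : Fin n → V))
        = fun X : Fin n → V => SL k (h (ALM σt k X)) := by
      funext X; rw [SL_apply]; rfl
    rw [this]
    exact (SL (V := V) k).contDiff.comp (hh.comp (ALM (V := V) σt k).contDiff)
  exact h1.clm_apply h2

lemma fderiv_single_comp (σt : Fin n → Fin n → Fin n) {h : (Fin n → V) → V}
    (hh : ContDiff ℝ (⊤ : ℕ∞) h) (k : Fin n) (X w : Fin n → V) :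
    fderiv ℝ (fun Y : Fin n → V => (Pi.single k (h (AM σt k Y)) : Fin n → V)) X w
      = Pi.single k (fderiv ℝ h (AM σt k X) (AM σt k w)) := by
  have h1 : (fun Y : Fin n → V => (Pi.single k (h (AM σt k Y)) : Fin n → V))
      = (SL k) ∘ (h ∘ (ALM σt k)) := by
    funext Y; simp only [Function.comp_apply, SL_apply]; rfl
  have hhd : Differentiable ℝ h := hh.differentiable (by simp)
  rw [h1, fderiv_comp (x := X) (SL (V := V) k).differentiableAt
    (((hhd.comp (ALM (V := V) σt k).differentiable)) _),
    fderiv_comp (x := X) (hhd _) (ALM (V := V) σt k).differentiableAt,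
    ContinuousLinearMap.fderiv, ContinuousLinearMap.fderiv]
  simp only [ContinuousLinearMap.coe_comp', Function.comp_apply, SL_apply]
  rfl

lemma fderiv_P (σt : Fin n → Fin n → Fin n) {g h : (Fin n → V) → V}
    (hg : ContDiff ℝ (⊤ : ℕ∞) g) (hh : ContDiff ℝ (⊤ : ℕ∞) h) (k : Fin n) (X w : Fin n → V) :
    fderiv ℝ (fun Y => fderiv ℝ g Y (Pi.single k (h (AM σt k Y)))) X w
      = fderiv ℝ (fderiv ℝ g) X w (Pi.single k (h (AM σt k X)))
        + fderiv ℝ g X (Pi.single k (fderiv ℝ h (AM σt k X) (AM σt k w))) := by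
  have hc : DifferentiableAt ℝ (fderiv ℝ g) X :=
    ((hg.fderiv_right (m := (⊤ : ℕ∞)) (by simp)).differentiable (by simp)) X
  have hu0 : ContDiff ℝ (⊤ : ℕ∞) (fun Y : Fin n → V => (Pi.single k (h (AM σt k Y)) : Fin n → V)) := by
    have : (fun Y : Fin n → V => (Pi.single k (h (AM σt k Y)) : Fin n → V))
        = fun Y : Fin n → V => SL k (h (ALM σt k Y)) := by
      funext Y; rw [SL_apply]; rfl
    rw [this]
    exact (SL (V := V) k).contDiff.comp (hh.comp (ALM (V := V) σt k).contDiff)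
  have hu : DifferentiableAt ℝ (fun Y : Fin n → V => (Pi.single k (h (AM σt k Y)) : Fin n → V)) X :=
    (hu0.differentiable (by simp)) X
  rw [fderiv_clm_apply hc hu]
  simp only [ContinuousLinearMap.add_apply, ContinuousLinearMap.flip_apply,
    ContinuousLinearMap.coe_comp', Function.comp_apply]
  rw [fderiv_single_comp σt hh k X w]
  abel

lemma sym2 [CompleteSpace V] {f : (Fin n → V) → V} (hf : ContDiff ℝ (⊤ : ℕ∞) f)
    (X a b : Fin n → V) :
    fderiv ℝ (fderiv ℝ f) X a b = fderiv ℝ (fderiv ℝ f) X b a := by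
  have h1 : ∀ Y, HasFDerivAt f (fderiv ℝ f Y) Y := fun Y =>
    ((hf.differentiable (by simp)) Y).hasFDerivAt
  have h2 : HasFDerivAt (fderiv ℝ f) (fderiv ℝ (fderiv ℝ f) X) X :=
    (((hf.fderiv_right (m := (⊤ : ℕ∞)) (by simp)).differentiable (by simp)) X).hasFDerivAt
  exact second_derivative_symmetric h1 h2 a b

lemma clm_AM_single (σt : Fin n → Fin n → Fin n) (L : (Fin n → V) →L[ℝ] V)
    (k j : Fin n) (v : V) :
    L (AM σt k (Pi.single j v)) = ∑ m : Fin n, if σt m k = j then L (Pi.single m v) else 0 := by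
  have h1 : AM σt k (Pi.single j v)
      = ∑ m : Fin n, if σt m k = j then Pi.single m v else 0 := by
    funext p
    rw [Finset.sum_apply]
    have hm : ∀ m : Fin n, (if σt m k = j then Pi.single m v else (0 : Fin n → V)) p
        = if p = m then (if σt m k = j then v else 0) else 0 := by
      intro m
      by_cases h1 : σt m k = j <;> by_cases h2 : p = m <;>
        simp [h1, h2, Pi.single_apply]
    simp only [hm]
    rw [Fintype.sum_ite_eq p (fun m => if σt m k = j then v else 0)]
    simp [AM, Pi.single_apply]
  rw [h1, map_sum]
  exact Finset.sum_congr rfl fun m _ => by rw [apply_ite L, map_zero]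

lemma AM_comp (σt : Fin n → Fin n → Fin n)
    (hassoc : ∀ p m k : Fin n, σt (σt p m) k = σt p (σt m k)) (m k : Fin n)
    (X : Fin n → V) :
    AM σt m (AM σt k X) = AM σt (σt m k) X := by
  funext p; simp [AM, hassoc]

/-- The double sum of second-derivative terms. -/
noncomputable def SS (σt : Fin n → Fin n → Fin n) (a b c : (Fin n → V) → V)
    (X : Fin n → V) : V :=
  ∑ j : Fin n, ∑ k : Fin n,
    fderiv ℝ (fderiv ℝ a) X (Pi.single j (b (AM σt j X))) (Pi.single k (c (AM σt k X)))

/-- The double sum of first-derivative terms. -/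
noncomputable def QQ (σt : Fin n → Fin n → Fin n) (a b c : (Fin n → V) → V)
    (X : Fin n → V) : V :=
  ∑ k : Fin n, ∑ m : Fin n,
    fderiv ℝ a X (Pi.single k
      (fderiv ℝ b (AM σt k X) (Pi.single m (c (AM σt m (AM σt k X))))))

lemma SS_symm [CompleteSpace V] (σt : Fin n → Fin n → Fin n)
    {a : (Fin n → V) → V} (ha : ContDiff ℝ (⊤ : ℕ∞) a) (b c : (Fin n → V) → V)
    (X : Fin n → V) : SS σt a b c X = SS σt a c b X := by
  unfold SS
  rw [Finset.sum_comm]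
  exact Finset.sum_congr rfl fun j _ => Finset.sum_congr rfl fun k _ => sym2 ha X _ _

lemma bracket_expand [CompleteSpace V] (σt : Fin n → Fin n → Fin n)
    (hassoc : ∀ p m k : Fin n, σt (σt p m) k = σt p (σt m k))
    {f g h : (Fin n → V) → V}
    (hf : ContDiff ℝ (⊤ : ℕ∞) f) (hg : ContDiff ℝ (⊤ : ℕ∞) g) (hh : ContDiff ℝ (⊤ : ℕ∞) h)
    (X : Fin n → V) :
    bracketS σt f (bracketS σt g h) X
      = QQ σt f g h X - QQ σt f h g X - SS σt g f h X - QQ σt g h f X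
        + SS σt h f g X + QQ σt h g f X := by
  -- Part 1: expansion of the "derivative of f" terms
  have hB : ∀ j : Fin n,
      fderiv ℝ f X (Pi.single j (bracketS σt g h (AM σt j X)))
        = ∑ k : Fin n,
            (fderiv ℝ f X (Pi.single j (fderiv ℝ g (AM σt j X)
                (Pi.single k (h (AM σt k (AM σt j X))))))
             - fderiv ℝ f X (Pi.single j (fderiv ℝ h (AM σt j X)
                (Pi.single k (g (AM σt k (AM σt j X))))))) := by
    intro j
    have hE : ∀ w : V, fderiv ℝ f X (Pi.single j w)
        = ((fderiv ℝ f X).comp (SL j)) w := by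
      intro w; simp [SL_apply]
    rw [hE, bracketS, map_sum]
    exact Finset.sum_congr rfl fun k _ => by rw [map_sub, hE, hE]
  -- Part 2: expansion of the "derivative of the bracket" terms
  have hD : ∀ j : Fin n,
      fderiv ℝ (bracketS σt g h) X (Pi.single j (f (AM σt j X)))
        = ∑ k : Fin n,
            (fderiv ℝ (fderiv ℝ g) X (Pi.single j (f (AM σt j X)))
                (Pi.single k (h (AM σt k X)))
              + fderiv ℝ g X (Pi.single k (fderiv ℝ h (AM σt k X)
                  (AM σt k (Pi.single j (f (AM σt j X))))))
              - (fderiv ℝ (fderiv ℝ h) X (Pi.single j (f (AM σt j X)))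
                  (Pi.single k (g (AM σt k X)))
                + fderiv ℝ h X (Pi.single k (fderiv ℝ g (AM σt k X)
                    (AM σt k (Pi.single j (f (AM σt j X)))))))) := by
    intro j
    have hdiff : ∀ k ∈ (Finset.univ : Finset (Fin n)), DifferentiableAt ℝ
        (fun Y => fderiv ℝ g Y (Pi.single k (h (AM σt k Y)))
          - fderiv ℝ h Y (Pi.single k (g (AM σt k Y)))) X := fun k _ =>
      (((contDiff_P σt hg hh k).differentiable (by simp)) X).sub
        (((contDiff_P σt hh hg k).differentiable (by simp)) X)
    rw [show (bracketS σt g h)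
        = (fun Y => ∑ k : Fin n, (fderiv ℝ g Y (Pi.single k (h (AM σt k Y)))
            - fderiv ℝ h Y (Pi.single k (g (AM σt k Y))))) from rfl]
    rw [fderiv_fun_sum hdiff, ContinuousLinearMap.sum_apply]
    refine Finset.sum_congr rfl fun k _ => ?_
    rw [fderiv_fun_sub (((contDiff_P σt hg hh k).differentiable (by simp)) X)
        (((contDiff_P σt hh hg k).differentiable (by simp)) X),
      ContinuousLinearMap.sub_apply,
      fderiv_P σt hg hh k X _, fderiv_P σt hh hg k X _]
  -- the swap of a triple sum with an ite
  have hswap : ∀ W : Fin n → Fin n → Fin n → V,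
      (∑ j : Fin n, ∑ k : Fin n, ∑ m : Fin n, if σt m k = j then W k m j else 0)
        = ∑ k : Fin n, ∑ m : Fin n, W k m (σt m k) := by
    intro W
    rw [Finset.sum_comm]
    refine Finset.sum_congr rfl fun k _ => ?_
    rw [Finset.sum_comm]
    exact Finset.sum_congr rfl fun m _ =>
      Fintype.sum_ite_eq (σt m k) (fun j => W k m j)
  -- expansion of the T2-type terms
  have hT2 : ∀ (a b : (Fin n → V) → V) (k j : Fin n),
      fderiv ℝ a X (Pi.single k (fderiv ℝ b (AM σt k X)
          (AM σt k (Pi.single j (f (AM σt j X))))))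
        = ∑ m : Fin n, if σt m k = j then
            fderiv ℝ a X (Pi.single k (fderiv ℝ b (AM σt k X)
              (Pi.single m (f (AM σt j X))))) else 0 := by
    intro a b k j
    rw [clm_AM_single σt (fderiv ℝ b (AM σt k X)) k j _]
    have hE : ∀ w : V, fderiv ℝ a X (Pi.single k w)
        = ((fderiv ℝ a X).comp (SL k)) w := by
      intro w; simp [SL_apply]
    rw [hE, map_sum]
    refine Finset.sum_congr rfl fun m _ => ?_
    rw [apply_ite ((fderiv ℝ a X).comp (SL k)), map_zero, ← hE]
  have e5 : ∀ a b : (Fin n → V) → V,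
      (∑ j : Fin n, ∑ k : Fin n, fderiv ℝ a X (Pi.single k (fderiv ℝ b (AM σt k X)
        (AM σt k (Pi.single j (f (AM σt j X))))))) = QQ σt a b f X := by
    intro a b
    calc (∑ j : Fin n, ∑ k : Fin n, fderiv ℝ a X (Pi.single k (fderiv ℝ b (AM σt k X)
          (AM σt k (Pi.single j (f (AM σt j X)))))))
        = ∑ j : Fin n, ∑ k : Fin n, ∑ m : Fin n, if σt m k = j then
            fderiv ℝ a X (Pi.single k (fderiv ℝ b (AM σt k X)
              (Pi.single m (f (AM σt j X))))) else 0 :=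
          Finset.sum_congr rfl fun j _ => Finset.sum_congr rfl fun k _ => hT2 a b k j
      _ = ∑ k : Fin n, ∑ m : Fin n,
            fderiv ℝ a X (Pi.single k (fderiv ℝ b (AM σt k X)
              (Pi.single m (f (AM σt (σt m k) X))))) :=
          hswap _
      _ = QQ σt a b f X := by
          unfold QQ
          refine Finset.sum_congr rfl fun k _ => Finset.sum_congr rfl fun m _ => ?_
          rw [AM_comp σt hassoc]
  calc bracketS σt f (bracketS σt g h) X
      = ∑ j : Fin n, (fderiv ℝ f X (Pi.single j (bracketS σt g h (AM σt j X)))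
          - fderiv ℝ (bracketS σt g h) X (Pi.single j (f (AM σt j X)))) := rfl
    _ = ∑ j : Fin n,
          ((∑ k : Fin n,
            (fderiv ℝ f X (Pi.single j (fderiv ℝ g (AM σt j X)
                (Pi.single k (h (AM σt k (AM σt j X))))))
             - fderiv ℝ f X (Pi.single j (fderiv ℝ h (AM σt j X)
                (Pi.single k (g (AM σt k (AM σt j X))))))))
          - (∑ k : Fin n,
            (fderiv ℝ (fderiv ℝ g) X (Pi.single j (f (AM σt j X)))
                (Pi.single k (h (AM σt k X)))
              + fderiv ℝ g X (Pi.single k (fderiv ℝ h (AM σt k X)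
                  (AM σt k (Pi.single j (f (AM σt j X))))))
              - (fderiv ℝ (fderiv ℝ h) X (Pi.single j (f (AM σt j X)))
                  (Pi.single k (g (AM σt k X)))
                + fderiv ℝ h X (Pi.single k (fderiv ℝ g (AM σt k X)
                    (AM σt k (Pi.single j (f (AM σt j X)))))))))) :=
        Finset.sum_congr rfl fun j _ => by rw [hB j, hD j]
    _ = QQ σt f g h X - QQ σt f h g X - SS σt g f h X - QQ σt g h f X
        + SS σt h f g X + QQ σt h g f X := by
        simp only [Finset.sum_sub_distrib, Finset.sum_add_distrib]
        rw [e5 g h, e5 h g]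
        rw [show (∑ j : Fin n, ∑ k : Fin n,
            fderiv ℝ f X (Pi.single j (fderiv ℝ g (AM σt j X)
              (Pi.single k (h (AM σt k (AM σt j X))))))) = QQ σt f g h X from rfl]
        rw [show (∑ j : Fin n, ∑ k : Fin n,
            fderiv ℝ f X (Pi.single j (fderiv ℝ h (AM σt j X)
              (Pi.single k (g (AM σt k (AM σt j X))))))) = QQ σt f h g X from rfl]
        rw [show (∑ j : Fin n, ∑ k : Fin n,
            fderiv ℝ (fderiv ℝ g) X (Pi.single j (f (AM σt j X)))
              (Pi.single k (h (AM σt k X)))) = SS σt g f h X from rfl]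
        rw [show (∑ j : Fin n, ∑ k : Fin n,
            fderiv ℝ (fderiv ℝ h) X (Pi.single j (f (AM σt j X)))
              (Pi.single k (g (AM σt k X)))) = SS σt h f g X from rfl]
        abel

end Helpers

/-- the symbolic bracket is antisymmetric and satisfies the
Jacobi identity [f,[g,h]]+[g,[h,f]]+[h,[f,g]] = 0 on smooth functions. -/
theorem stmt7 {N n : ℕ} {V : Type*} [NormedAddCommGroup V] [NormedSpace ℝ V]
    [FiniteDimensional ℝ V]
    (σ : Fin n → Fin N → Fin N)
    (hinj : Function.Injective σ)
    (σt : Fin n → Fin n → Fin n)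
    (hσt : ∀ j k : Fin n, σ (σt j k) = σ j ∘ σ k)
    (f g h : (Fin n → V) → V)
    (hf : ContDiff ℝ (⊤ : ℕ∞) f) (hg : ContDiff ℝ (⊤ : ℕ∞) g) (hh : ContDiff ℝ (⊤ : ℕ∞) h) :
    (∀ X : Fin n → V, bracketS σt f g X = - bracketS σt g f X) ∧
    (∀ X : Fin n → V,
      bracketS σt f (bracketS σt g h) X
        + bracketS σt g (bracketS σt h f) X
        + bracketS σt h (bracketS σt f g) X = 0) := by
  have : CompleteSpace V := FiniteDimensional.complete ℝ V
  have hassoc : ∀ p m k : Fin n, σt (σt p m) k = σt p (σt m k) := by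
    intro p m k
    apply hinj
    rw [hσt, hσt, hσt, hσt]
    rfl
  constructor
  · intro X
    have : bracketS σt f g X + bracketS σt g f X = 0 := by
      rw [bracketS, bracketS, ← Finset.sum_add_distrib]
      refine Finset.sum_eq_zero fun j _ => ?_
      abel
    exact eq_neg_of_add_eq_zero_left this
  · intro X
    rw [bracket_expand σt hassoc hf hg hh X,
      bracket_expand σt hassoc hg hh hf X,
      bracket_expand σt hassoc hh hf hg X,
      SS_symm σt hg f h X, SS_symm σt hh g f X, SS_symm σt hf h g X]
    abel
end

section
/- Let Σ = {σ₁,…,σₙ} be self-maps of {1,…,N} and P a partition of {1,…,N}. The following are equivalent: (i) every σⱼ maps each element of P into some element of P (P is balanced); (ii) for every function f : V^n → V, the polydiagonal subspace Syn_P = {x ∈ V^N : x_{i₁} = x_{i₂} whenever i₁, i₂ lie in the same part of P} is invariant under the network map γ_f, i.e. γ_f(Syn_P) ⊆ Syn_P. (Here V is assumed to be nontrivial.) -/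
/-! A balanced partition makes every network map preserve synchrony because `γ_f x` at a cell only
sees `x` at the images of that cell. Conversely, if `σ j` sent two cells of one part into different
parts `P` and `Q`, then taking `f` to be the `j`-th projection and `x` equal to `a` on `P` and to
`b ≠ a` elsewhere gives a synchronous `x` for which `γ_f x` is not synchronous. -/

section Polydiagonal

variable {α V : Type*}

/-- The polydiagonal `Syn_P` of the partition into the classes of `r`. -/
def polydiagonal (r : α → α → Prop) (V : Type*) : Set (α → V) :=
  {x | ∀ i₁ i₂, r i₁ i₂ → x i₁ = x i₂}

theorem ite_rel_mem_polydiagonal {r : α → α → Prop} (hr : Equivalence r) (c : α)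
    [DecidablePred (r · c)] (a b : V) : (fun i => if r i c then a else b) ∈ polydiagonal r V :=
  fun _ _ hpq => if_congr ⟨hr.trans (hr.symm hpq), hr.trans hpq⟩ rfl rfl

theorem rel_apply_of_comp_mem_polydiagonal [Nontrivial V] {r : α → α → Prop} (hr : Equivalence r)
    {τ : α → α} (hτ : ∀ x ∈ polydiagonal r V, x ∘ τ ∈ polydiagonal r V) {i₁ i₂ : α}
    (h : r i₁ i₂) : r (τ i₁) (τ i₂) := by
  classical
  obtain ⟨a, b, hab⟩ := exists_pair_ne V
  by_contra hne
  have hx := hτ _ (ite_rel_mem_polydiagonal hr (τ i₁) a b) i₁ i₂ h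
  simp only [Function.comp_apply, if_pos (hr.refl _), if_neg (fun h' => hne (hr.symm h'))] at hx
  exact hab hx

end Polydiagonal

theorem net_mem_polydiagonal {N n : ℕ} {V : Type*} {σ : Fin n → Fin N → Fin N}
    {r : Fin N → Fin N → Prop} (hσ : ∀ j i₁ i₂, r i₁ i₂ → r (σ j i₁) (σ j i₂))
    (f : (Fin n → V) → V) {x : Fin N → V} (hx : x ∈ polydiagonal r V) :
    net σ f x ∈ polydiagonal r V :=
  fun i₁ i₂ h => congrArg f (funext fun j => hx _ _ (hσ j i₁ i₂ h))

theorem stmt10_general {N n : ℕ} {V : Type*} [Nontrivial V]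
    (σ : Fin n → Fin N → Fin N)
    (r : Fin N → Fin N → Prop) (hr : Equivalence r) :
    (∀ (j : Fin n) (i₁ i₂ : Fin N), r i₁ i₂ → r (σ j i₁) (σ j i₂)) ↔
      (∀ (f : (Fin n → V) → V) (x : Fin N → V),
        (∀ i₁ i₂ : Fin N, r i₁ i₂ → x i₁ = x i₂) →
        (∀ i₁ i₂ : Fin N, r i₁ i₂ → net σ f x i₁ = net σ f x i₂)) := by
  refine ⟨fun hσ f x hx => net_mem_polydiagonal hσ f hx, fun hinv j _ _ h => ?_⟩
  -- `γ_f` for the `j`-th projection `f` is precomposition with `σ j`.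
  exact rel_apply_of_comp_mem_polydiagonal hr (fun x hx => hinv (fun y => y j) x hx) h

/-- for a partition of {1,…,N} (given as an equivalence
relation r), the partition is balanced (each σⱼ maps parts into parts) iff
for every f the polydiagonal Syn_P = {x : xᵢ₁ = xᵢ₂ whenever r i₁ i₂} is
invariant under γ_f. (V nontrivial.) -/
theorem stmt10 {N n : ℕ} {V : Type*} [AddCommGroup V] [Module ℝ V]
    [Nontrivial V]
    (σ : Fin n → Fin N → Fin N)
    (r : Fin N → Fin N → Prop) (hr : Equivalence r) :
    (∀ (j : Fin n) (i₁ i₂ : Fin N), r i₁ i₂ → r (σ j i₁) (σ j i₂)) ↔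
      (∀ (f : (Fin n → V) → V) (x : Fin N → V),
        (∀ i₁ i₂ : Fin N, r i₁ i₂ → x i₁ = x i₂) →
        (∀ i₁ i₂ : Fin N, r i₁ i₂ → net σ f x i₁ = net σ f x i₂)) :=
  stmt10_general σ r hr
end

section
/- Define the fundamental network map Γ_f : V^n → V^n by (Γ_f)_j(X) = f(A_{σⱼ}X). Then every π_i : V^N → V^n conjugates γ_f to Γ_f: Γ_f ∘ π_i = π_i ∘ γ_f for all 1 ≤ i ≤ N. -/
/-- The map π_i : V^N → V^n. -/
def piM {N n : ℕ} {V : Type*} (σ : Fin n → Fin N → Fin N) (i : Fin N)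
    (x : Fin N → V) : Fin n → V := fun j => x (σ j i)

/-- The fundamental network map Γ_f : V^n → V^n, (Γ_f)_j(X) = f(A_{σⱼ}X). -/
def fnet {n : ℕ} {V : Type*} (σt : Fin n → Fin n → Fin n)
    (f : (Fin n → V) → V) (X : Fin n → V) : Fin n → V :=
  fun j => f (AM σt j X)

theorem AM_comp_piM {N n : ℕ} {V : Type*} (σ : Fin n → Fin N → Fin N)
    (σt : Fin n → Fin n → Fin n) (hσt : ∀ j k : Fin n, σ (σt j k) = σ j ∘ σ k)
    (j : Fin n) (i : Fin N) :
    AM (V := V) σt j ∘ piM σ i = piM σ (σ j i) := by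
  funext x k
  simp only [Function.comp_apply, AM, piM, hσt]

theorem stmt13_general {N n : ℕ} {V : Type*} (σ : Fin n → Fin N → Fin N)
    (σt : Fin n → Fin n → Fin n)
    (hσt : ∀ j k : Fin n, σ (σt j k) = σ j ∘ σ k)
    (f : (Fin n → V) → V) :
    ∀ i : Fin N, (fnet σt f) ∘ (piM σ i) = (piM σ i) ∘ (net σ f) := by
  intro i
  funext x j
  exact congrArg f (congrFun (AM_comp_piM σ σt hσt j i) x)

/-- every π_i conjugates γ_f to Γ_f: Γ_f ∘ π_i = π_i ∘ γ_f. -/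
theorem stmt13 {N n : ℕ} {V : Type*} (σ : Fin n → Fin N → Fin N)
    (hinj : Function.Injective σ)
    (σt : Fin n → Fin n → Fin n)
    (hσt : ∀ j k : Fin n, σ (σt j k) = σ j ∘ σ k)
    (f : (Fin n → V) → V) :
    ∀ i : Fin N, (fnet σt f) ∘ (piM σ i) = (piM σ i) ∘ (net σ f) :=
  stmt13_general σ σt hσt f
end

section
/- For each fixed 1 ≤ i ≤ N, the image of π_i equals the polydiagonal Syn_{P(i)} = {X ∈ V^n : X_{j₁} = X_{j₂} whenever σ_{j₁}(i) = σ_{j₂}(i)}, and the partition P(i) of {1,…,n} (grouping j₁, j₂ together iff σ_{j₁}(i) = σ_{j₂}(i)) is balanced for the maps σ̃₁,…,σ̃ₙ: if σ_{j₁}(i) = σ_{j₂}(i) then σ_{σ̃ₖ(j₁)}(i) = σ_{σ̃ₖ(j₂)}(i) for all k. -/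
theorem Function.range_comp_right_eq_setOf_factorsThrough {α β γ : Type*} [Nonempty γ] (f : α → β) :
    Set.range (fun e : β → γ => e ∘ f) = {g | g.FactorsThrough f} := by
  ext g
  simp only [Set.mem_range, Set.mem_ofPred_eq, Function.factorsThrough_iff, eq_comm]

theorem apply_mul_eq_apply_mul_of_apply_eq {ι X : Type*} {σ : ι → X → X} {mul : ι → ι → ι}
    (hmul : ∀ j k, σ (mul j k) = σ j ∘ σ k) (i : X) (k : ι) {j₁ j₂ : ι}
    (h : σ j₁ i = σ j₂ i) : σ (mul k j₁) i = σ (mul k j₂) i := by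
  rw [hmul, hmul, Function.comp_apply, Function.comp_apply, h]

theorem stmt16_general {N n : ℕ} {V : Type*} [AddCommGroup V]
    (σ : Fin n → Fin N → Fin N)
    (σt : Fin n → Fin n → Fin n)
    (hσt : ∀ j k : Fin n, σ (σt j k) = σ j ∘ σ k)
    (i : Fin N) :
    Set.range (piM (V := V) σ i) =
        {X : Fin n → V | ∀ j₁ j₂ : Fin n, σ j₁ i = σ j₂ i → X j₁ = X j₂} ∧
      (∀ (k j₁ j₂ : Fin n), σ j₁ i = σ j₂ i →
        σ (σt k j₁) i = σ (σt k j₂) i) :=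
  ⟨Function.range_comp_right_eq_setOf_factorsThrough (fun j => σ j i),
    fun k _ _ => apply_mul_eq_apply_mul_of_apply_eq hσt i k⟩

/-- the image of π_i is the polydiagonal
{X : X_{j₁} = X_{j₂} whenever σ_{j₁}(i) = σ_{j₂}(i)}, and the corresponding
partition of {1,…,n} is balanced for the maps σ̃₁,…,σ̃ₙ. -/
theorem stmt16 {N n : ℕ} {V : Type*} [AddCommGroup V] [Module ℝ V]
    [Nontrivial V]
    (σ : Fin n → Fin N → Fin N)
    (hinj : Function.Injective σ)
    (σt : Fin n → Fin n → Fin n)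
    (hσt : ∀ j k : Fin n, σ (σt j k) = σ j ∘ σ k)
    (i : Fin N) :
    Set.range (piM (V := V) σ i) =
        {X : Fin n → V | ∀ j₁ j₂ : Fin n, σ j₁ i = σ j₂ i → X j₁ = X j₂} ∧
      (∀ (k j₁ j₂ : Fin n), σ j₁ i = σ j₂ i →
        σ (σt k j₁) i = σ (σt k j₂) i) :=
  stmt16_general σ σt hσt i
end

section
/- Suppose p is a permutation of {1,…,N}, q a permutation of {1,…,n}, and p ∘ σⱼ = σ_{q(j)} ∘ p for all j. If moreover f ∘ λ_q ∘ π_i = f ∘ π_i for all i (f has the input symmetry q on the relevant subspaces), then γ_f ∘ λ_p = λ_p ∘ γ_f, i.e. λ_p is a symmetry of the network map. Moreover, π_i ∘ λ_p = λ_q ∘ π_{p(i)} for all i. -/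
/-- Coordinate permutation λ_p, (λ_p x)_i = x_{p(i)}. -/
def lam {m : ℕ} {V : Type*} (p : Equiv.Perm (Fin m)) (x : Fin m → V) :
    Fin m → V := fun i => x (p i)

section

variable {N n : ℕ} {V : Type*} {σ : Fin n → Fin N → Fin N}
  {p : Equiv.Perm (Fin N)} {q : Equiv.Perm (Fin n)}

theorem piM_comp_lam (hpq : ∀ j i, p (σ j i) = σ (q j) (p i)) (i : Fin N) :
    piM (V := V) σ i ∘ lam p = lam q ∘ piM σ (p i) := by
  funext x j
  simp only [Function.comp_apply, piM, lam, hpq]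

theorem net_comp_lam (hpq : ∀ j i, p (σ j i) = σ (q j) (p i)) (f : (Fin n → V) → V)
    (hf : ∀ i x, f (lam q (piM σ i x)) = f (piM σ i x)) :
    net σ f ∘ lam p = lam p ∘ net σ f := by
  funext x i
  show f (piM σ i (lam p x)) = f (piM σ (p i) x)
  rw [← hf (p i) x]
  exact congrArg f (congrFun (piM_comp_lam hpq i) x)

end

/-- if p ∘ σⱼ = σ_{q(j)} ∘ p for all j and f has the input
symmetry q on the images of all π_i, then γ_f ∘ λ_p = λ_p ∘ γ_f; moreover
π_i ∘ λ_p = λ_q ∘ π_{p(i)} for all i. -/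
theorem stmt19 {N n : ℕ} {V : Type*} (σ : Fin n → Fin N → Fin N)
    (p : Equiv.Perm (Fin N)) (q : Equiv.Perm (Fin n))
    (hpq : ∀ (j : Fin n) (i : Fin N), p (σ j i) = σ (q j) (p i))
    (f : (Fin n → V) → V)
    (hf : ∀ (i : Fin N) (x : Fin N → V),
      f (lam q (piM σ i x)) = f (piM σ i x)) :
    ((net σ f) ∘ (lam p) = (lam p) ∘ (net σ f)) ∧
      (∀ i : Fin N, (piM (V := V) σ i) ∘ (lam p) = (lam q) ∘ (piM σ (p i))) :=
  ⟨net_comp_lam hpq f hf, piM_comp_lam hpq⟩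
end
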